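/- arXiv:1910.10421 — 7 statements merged into one kernel-verified Lean document; each statement's English description precedes it below -/
import Mathlib

section
/- If a lens satisfies the Undoability law (∀ s ∈ S, ∀ v ∈ V, Put(Put(s, v), Get(s)) = s), then it satisfies the WeakPutGet law (∀ s ∈ S, ∀ v ∈ V, Put(s, Get(Put(s, v))) = Put(s, v)). -/
/-- Undoability implies WeakPutGet. -/
theorem undoability_implies_weakPutGet {S V : Type*} (Get : S → V) (Put : S → V → S)
    (hUD : ∀ s : S, ∀ v : V, Put (Put s v) (Get s) = s) :
    ∀ s : S, ∀ v : V, Put s (Get (Put s v)) = Put s v := fun s v =>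
  calc Put s (Get (Put s v))
      = Put (Put (Put s v) (Get s)) (Get (Put s v)) := by rw [hUD s v]
    _ = Put s v := hUD (Put s v) (Get s)
end

section
/- If a lens satisfies both the SourceStability law (∀ s ∈ S, ∃ v ∈ V, Put(s, v) = s) and the Undoability law (∀ s ∈ S, ∀ v ∈ V, Put(Put(s, v), Get(s)) = s), then it satisfies the GetPut law (∀ s ∈ S, Put(s, Get(s)) = s). -/
/-- SourceStability and Undoability imply GetPut. -/
theorem sourceStability_undoability_implies_getPut {S V : Type*} (Get : S → V) (Put : S → V → S)
    (hSS : ∀ s : S, ∃ v : V, Put s v = s)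
    (hUD : ∀ s : S, ∀ v : V, Put (Put s v) (Get s) = s) :
    ∀ s : S, Put s (Get s) = s := by
  intro s
  obtain ⟨v, hv⟩ := hSS s
  simpa only [hv] using hUD s v
end

section
/- If a lens satisfies both the SourceStability law (∀ s ∈ S, ∃ v ∈ V, Put(s, v) = s) and the WeakPutGet law (∀ s ∈ S, ∀ v ∈ V, Put(s, Get(Put(s, v))) = Put(s, v)), then it satisfies the GetPut law (∀ s ∈ S, Put(s, Get(s)) = s). -/
/-- SourceStability and WeakPutGet imply GetPut. -/
theorem sourceStability_weakPutGet_implies_getPut {S V : Type*} (Get : S → V) (Put : S → V → S)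
    (hSS : ∀ s : S, ∃ v : V, Put s v = s)
    (hWPG : ∀ s : S, ∀ v : V, Put s (Get (Put s v)) = Put s v) :
    ∀ s : S, Put s (Get s) = s := by
  intro s
  obtain ⟨v, hv⟩ := hSS s
  calc Put s (Get s) = Put s (Get (Put s v)) := by rw [hv]
    _ = Put s v := hWPG s v
    _ = s := hv
end

section
/- If a lens satisfies both the PutInjectivity law (∀ s ∈ S, ∀ v v' ∈ V, Put(s, v) = Put(s, v') implies v = v') and the WeakPutGet law (∀ s ∈ S, ∀ v ∈ V, Put(s, Get(Put(s, v))) = Put(s, v)), then it satisfies the PutGet law (∀ s ∈ S, ∀ v ∈ V, Get(Put(s, v)) = v). -/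
/-- PutInjectivity and WeakPutGet imply PutGet. -/
theorem putInjectivity_weakPutGet_implies_putGet {S V : Type*} (Get : S → V) (Put : S → V → S)
    (hPI : ∀ s : S, ∀ v v' : V, Put s v = Put s v' → v = v')
    (hWPG : ∀ s : S, ∀ v : V, Put s (Get (Put s v)) = Put s v) :
    ∀ s : S, ∀ v : V, Get (Put s v) = v :=
  fun s v => hPI s _ v (hWPG s v)
end

section
/- If a lens satisfies both the PutSurjectivity law (∀ s ∈ S, ∃ s' ∈ S, ∃ v ∈ V, Put(s', v) = s) and the PutTwice law (∀ s ∈ S, ∀ v ∈ V, Put(Put(s, v), v) = Put(s, v)), then it satisfies the SourceStability law (∀ s ∈ S, ∃ v ∈ V, Put(s, v) = s). -/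
/-- PutSurjectivity and PutTwice imply SourceStability. -/
theorem putSurjectivity_putTwice_implies_sourceStability {S V : Type*} (Put : S → V → S)
    (hPS : ∀ s : S, ∃ s' : S, ∃ v : V, Put s' v = s)
    (hPT : ∀ s : S, ∀ v : V, Put (Put s v) v = Put s v) :
    ∀ s : S, ∃ v : V, Put s v = s := by
  intro s
  obtain ⟨s', v, rfl⟩ := hPS s
  exact ⟨v, hPT s' v⟩
end

section
/- If a lens satisfies both the SourceStability law (∀ s ∈ S, ∃ v ∈ V, Put(s, v) = s) and the ViewDetermination law (∀ s s' ∈ S, ∀ v v' ∈ V, Put(s, v) = Put(s', v') implies v = v'), then it satisfies the PutTwice law (∀ s ∈ S, ∀ v ∈ V, Put(Put(s, v), v) = Put(s, v)). -/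
/-- SourceStability and ViewDetermination imply PutTwice. -/
theorem sourceStability_viewDetermination_implies_putTwice {S V : Type*} (Put : S → V → S)
    (hSS : ∀ s : S, ∃ v : V, Put s v = s)
    (hVD : ∀ s s' : S, ∀ v v' : V, Put s v = Put s' v' → v = v') :
    ∀ s : S, ∀ v : V, Put (Put s v) v = Put s v := by
  intro s v
  obtain ⟨w, hw⟩ := hSS (Put s v)
  -- `Put s v` is the result of putting both `w` and `v`, so the two views agree.
  obtain rfl : w = v := hVD _ _ _ _ hw
  exact hw
end

section
/- If a lens satisfies both the StrongGetPut law (∀ s s' ∈ S, Put(s, Get(s')) = s') and the PutInjectivity law (∀ s ∈ S, ∀ v v' ∈ V, Put(s, v) = Put(s, v') implies v = v'), then it satisfies the PutPut law (∀ s ∈ S, ∀ v v' ∈ V, Put(Put(s, v), v') = Put(s, v')). -/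
/-- StrongGetPut and PutInjectivity imply PutPut. -/
theorem strongGetPut_putInjectivity_implies_putPut {S V : Type*} (Get : S → V) (Put : S → V → S)
    (hSGP : ∀ s s' : S, Put s (Get s') = s')
    (hPI : ∀ s : S, ∀ v v' : V, Put s v = Put s v' → v = v') :
    ∀ s : S, ∀ v v' : V, Put (Put s v) v' = Put s v' := by
  intro s v v'
  have putGet : Get (Put s v') = v' :=
    Function.LeftInverse.rightInverse_of_injective (hSGP s) (hPI s) v'
  calc Put (Put s v) v' = Put (Put s v) (Get (Put s v')) := by rw [putGet]
    _ = Put s v' := hSGP _ _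
end
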